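/- The number of connected polyominoes consisting of exactly 5 cells in the 2D square grid, counted up to translation and rotation by multiples of π/2 (but not reflection), is exactly 18. -/

import Mathlib

/-!
Every connected polyomino with `n + 2` cells arises from a connected one with `n + 1` cells by
adding an adjacent cell: inside a connected set, a connected subset can be grown one adjacent
cell at a time. So, up to translation, the connected pentominoes are among the sets obtained from
one cell by four rounds of "add an adjacent cell, then translate into the first quadrant"
(63 fixed pentominoes). Two polyominoes are equivalent exactly when they have the same set of
normalized rotations, and these 63 pentominoes have 18 distinct such sets, which the kernel
checks by evaluation.
-/

/-- Side-adjacency of cells in the 2D square grid. -/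
def Adj (a b : ℤ × ℤ) : Prop := (a.1 - b.1).natAbs + (a.2 - b.2).natAbs = 1

/-- A polyomino (finite set of cells) is connected if its side-adjacency graph is connected. -/
def Conn (P : Finset (ℤ × ℤ)) : Prop :=
  ∀ a ∈ P, ∀ b ∈ P, Relation.ReflTransGen (fun x y => x ∈ P ∧ y ∈ P ∧ Adj x y) a b

/-- Rotation by π/2 about the origin. -/
def rotQ (c : ℤ × ℤ) : ℤ × ℤ := (-c.2, c.1)

/-- Connected 5-cell polyominoes. -/
def Pento : Type := {P : Finset (ℤ × ℤ) // P.card = 5 ∧ Conn P}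

/-- Equivalence up to translation and rotation by multiples of π/2 (no reflection). -/
def pentoRel (P Q : Pento) : Prop :=
  ∃ (k : ℕ) (t : ℤ × ℤ), Q.1 = P.1.image (fun c => rotQ^[k] c + t)

open Finset Relation

theorem Nat.card_quot_eq_card_range {α β : Type*} {r : α → α → Prop} (f : α → β)
    (hr : ∀ a b, r a b ↔ f a = f b) : Nat.card (Quot r) = Nat.card (Set.range f) := by
  obtain rfl : r = Setoid.ker f := funext₂ fun a b => propext (hr a b)
  exact Nat.card_congr (Setoid.quotientKerEquivRange f)

lemma adj_comm {a b : ℤ × ℤ} : Adj a b ↔ Adj b a := by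
  unfold Adj; omega

lemma adj_add_right {a b t : ℤ × ℤ} : Adj (a + t) (b + t) ↔ Adj a b := by
  simp [Adj]

section Connectivity

variable {P S : Finset (ℤ × ℤ)}

abbrev AdjIn (P : Finset (ℤ × ℤ)) (x y : ℤ × ℤ) : Prop := x ∈ P ∧ y ∈ P ∧ Adj x y

lemma adjIn_mono {Q : Finset (ℤ × ℤ)} (h : P ⊆ Q) : AdjIn P ≤ AdjIn Q :=
  fun _ _ ⟨hx, hy, hxy⟩ => ⟨h hx, h hy, hxy⟩

lemma reflTransGen_adjIn_symm {a b : ℤ × ℤ} (h : ReflTransGen (AdjIn P) a b) :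
    ReflTransGen (AdjIn P) b a :=
  ReflTransGen.mono (fun _ _ ⟨hx, hy, hxy⟩ => ⟨hy, hx, adj_comm.1 hxy⟩) _ _
    (ReflTransGen.swap _ _ h)

lemma conn_of_forall_reflTransGen (q : ℤ × ℤ) (h : ∀ a ∈ P, ReflTransGen (AdjIn P) q a) :
    Conn P :=
  fun a ha b hb => (reflTransGen_adjIn_symm (h a ha)).trans (h b hb)

lemma Conn.image_add (h : Conn P) (t : ℤ × ℤ) : Conn (P.image (· + t)) := by
  intro a' ha' b' hb'
  obtain ⟨a, ha, rfl⟩ := mem_image.1 ha'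
  obtain ⟨b, hb, rfl⟩ := mem_image.1 hb'
  refine (h a ha b hb).lift (· + t) fun x y ⟨hx, hy, hxy⟩ => ?_
  exact ⟨mem_image_of_mem _ hx, mem_image_of_mem _ hy, adj_add_right.2 hxy⟩

lemma Conn.insert_of_adj (h : Conn P) {q c : ℤ × ℤ} (hq : q ∈ P) (hqc : Adj q c) :
    Conn (insert c P) := by
  refine conn_of_forall_reflTransGen q fun a ha => ?_
  rcases mem_insert.1 ha with rfl | ha
  · exact .single ⟨mem_insert_of_mem hq, mem_insert_self _ _, hqc⟩
  · exact ReflTransGen.mono (adjIn_mono (subset_insert c P)) _ _ (h q hq a ha)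

lemma Conn.exists_adj_of_ssubset (h : Conn P) (hS : S ⊂ P) (hne : S.Nonempty) :
    ∃ q ∈ S, ∃ c ∈ P \ S, Adj q c := by
  obtain ⟨a, ha⟩ := hne
  obtain ⟨b, hbP, hbS⟩ := exists_of_ssubset hS
  have leaves : ∀ b, ReflTransGen (AdjIn P) a b → b ∉ S → ∃ q ∈ S, ∃ c ∈ P \ S, Adj q c := by
    intro b hab
    induction hab with
    | refl => exact fun h => absurd ha h
    | @tail x y _ hxy ih =>
      intro hyS
      by_cases hxS : x ∈ S
      · exact ⟨x, hxS, y, mem_sdiff.2 ⟨hxy.2.1, hyS⟩, hxy.2.2⟩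
      · exact ih hxS
  exact leaves b (h a (hS.subset ha) b hbP) hbS

lemma Conn.exists_subset_card_eq (h : Conn P) {k : ℕ} (hk : 1 ≤ k) (hkP : k ≤ P.card) :
    ∃ S ⊆ P, S.card = k ∧ Conn S := by
  induction k, hk using Nat.le_induction with
  | base =>
    obtain ⟨a, ha⟩ := card_pos.1 hkP
    exact ⟨{a}, singleton_subset_iff.2 ha, card_singleton a, by simp [Conn, ReflTransGen.refl]⟩
  | succ k hk ih =>
    obtain ⟨S, hSP, hSk, hS⟩ := ih (by omega)
    have hSsub : S ⊂ P := ssubset_of_subset_of_ne hSP (by rintro rfl; omega)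
    obtain ⟨q, hq, c, hc, hqc⟩ := h.exists_adj_of_ssubset hSsub (card_pos.1 (by omega))
    obtain ⟨hcP, hcS⟩ := mem_sdiff.1 hc
    exact ⟨insert c S, insert_subset hcP hSP, by rw [card_insert_of_notMem hcS, hSk],
      hS.insert_of_adj hq hqc⟩

lemma Conn.exists_eq_insert (h : Conn P) {n : ℕ} (hP : P.card = n + 2) :
    ∃ S, S.card = n + 1 ∧ Conn S ∧ ∃ q ∈ S, ∃ c ∉ S, Adj q c ∧ P = insert c S := by
  obtain ⟨S, hSP, hSn, hS⟩ := h.exists_subset_card_eq (k := n + 1) (by omega) (by omega)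
  have hSsub : S ⊂ P := ssubset_of_subset_of_ne hSP (by rintro rfl; omega)
  obtain ⟨q, hq, c, hc, hqc⟩ := h.exists_adj_of_ssubset hSsub (card_pos.1 (by omega))
  obtain ⟨hcP, hcS⟩ := mem_sdiff.1 hc
  have hcard : P.card ≤ (insert c S).card := by rw [card_insert_of_notMem hcS, hSn, hP]
  exact ⟨S, hSn, hS, q, hq, c, hcS, hqc,
    (eq_of_subset_of_card_le (insert_subset hcP hSP) hcard).symm⟩

end Connectivity

namespace Polyomino

def neighbors (P : Finset (ℤ × ℤ)) : Finset (ℤ × ℤ) :=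
  P.biUnion fun c => {c + (1, 0), c - (1, 0), c + (0, 1), c - (0, 1)}

lemma mem_neighbors {P : Finset (ℤ × ℤ)} {c : ℤ × ℤ} : c ∈ neighbors P ↔ ∃ q ∈ P, Adj q c := by
  simp only [neighbors, mem_biUnion, mem_insert, mem_singleton]
  refine exists_congr fun q => and_congr_right fun _ => ?_
  obtain ⟨x, y⟩ := q
  obtain ⟨u, v⟩ := c
  simp only [Prod.mk_add_mk, Prod.mk_sub_mk, add_zero, sub_zero, Prod.ext_iff, Adj]
  omega

section Normalization

def minCorner (P : Finset (ℤ × ℤ)) : ℤ × ℤ :=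
  ((P.image Prod.fst).min.untopD 0, (P.image Prod.snd).min.untopD 0)

def normalize (P : Finset (ℤ × ℤ)) : Finset (ℤ × ℤ) := P.image (· - minCorner P)

lemma untopD_min_image_add {s : Finset ℤ} (hs : s.Nonempty) (a : ℤ) :
    (s.image (· + a)).min.untopD 0 = s.min.untopD 0 + a := by
  rw [← coe_min' hs, ← coe_min' (hs.image _), min'_image (add_left_mono (a := a))]
  rfl

lemma minCorner_image_add {P : Finset (ℤ × ℤ)} (hP : P.Nonempty) (t : ℤ × ℤ) :
    minCorner (P.image (· + t)) = minCorner P + t := by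
  refine Prod.ext ?_ ?_ <;>
  · simp only [minCorner, Prod.fst_add, Prod.snd_add]
    rw [← untopD_min_image_add (hP.image _), image_image, image_image]
    rfl

lemma normalize_image_add (P : Finset (ℤ × ℤ)) (t : ℤ × ℤ) :
    normalize (P.image (· + t)) = normalize P := by
  rcases P.eq_empty_or_nonempty with rfl | hP
  · rfl
  · simp only [normalize, minCorner_image_add hP, image_image]
    congr 1
    funext c
    simp only [Function.comp_apply]
    abel

lemma image_add_minCorner_normalize (P : Finset (ℤ × ℤ)) :
    (normalize P).image (· + minCorner P) = P := by
  simp [normalize, image_image, Function.comp_def]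

lemma normalize_eq_image_add (P : Finset (ℤ × ℤ)) :
    normalize P = P.image (· + -minCorner P) := by
  simp only [normalize, sub_eq_add_neg]

end Normalization

section Enumeration

def grow (S : Finset (Finset (ℤ × ℤ))) : Finset (Finset (ℤ × ℤ)) :=
  S.biUnion fun Q => (neighbors Q \ Q).image fun c => normalize (insert c Q)

-- Index shift: the members of `fixedPolyominoes n` have `n + 1` cells.
def fixedPolyominoes : ℕ → Finset (Finset (ℤ × ℤ))
  | 0 => {{(0, 0)}}
  | n + 1 => grow (fixedPolyominoes n)

lemma mem_grow {S : Finset (Finset (ℤ × ℤ))} {P : Finset (ℤ × ℤ)} :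
    P ∈ grow S ↔ ∃ Q ∈ S, ∃ c ∈ neighbors Q, c ∉ Q ∧ normalize (insert c Q) = P := by
  simp [grow, and_assoc]

lemma card_eq_and_conn_of_mem_fixedPolyominoes {n : ℕ} {P : Finset (ℤ × ℤ)}
    (hP : P ∈ fixedPolyominoes n) : P.card = n + 1 ∧ Conn P := by
  induction n generalizing P with
  | zero =>
    obtain rfl : P = {(0, 0)} := mem_singleton.1 hP
    exact ⟨rfl, by simp [Conn, ReflTransGen.refl]⟩
  | succ n ih =>
    obtain ⟨Q, hQ, c, hc, hcQ, rfl⟩ := mem_grow.1 hP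
    obtain ⟨q, hq, hqc⟩ := mem_neighbors.1 hc
    obtain ⟨hcard, hconn⟩ := ih hQ
    rw [normalize_eq_image_add, card_image_of_injective _ (add_left_injective _),
      card_insert_of_notMem hcQ, hcard]
    exact ⟨rfl, (hconn.insert_of_adj hq hqc).image_add _⟩

lemma exists_mem_fixedPolyominoes {n : ℕ} {P : Finset (ℤ × ℤ)} (hP : P.card = n + 1)
    (hconn : Conn P) : ∃ Q ∈ fixedPolyominoes n, ∃ t, P = Q.image (· + t) := by
  induction n generalizing P with
  | zero =>
    obtain ⟨a, rfl⟩ := card_eq_one.1 hP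
    exact ⟨{(0, 0)}, mem_singleton_self _, a, by simp⟩
  | succ n ih =>
    obtain ⟨S, hSn, hS, q, hq, c, hcS, hqc, rfl⟩ := hconn.exists_eq_insert hP
    obtain ⟨Q, hQ, t, rfl⟩ := ih hSn hS
    obtain ⟨q, hqQ, rfl⟩ := mem_image.1 hq
    set R := insert (c - t) Q
    have hc : c - t ∈ neighbors Q :=
      mem_neighbors.2 ⟨q, hqQ, by simpa [sub_eq_add_neg] using adj_add_right (t := -t) |>.2 hqc⟩
    have hcQ : c - t ∉ Q := fun h => hcS (mem_image.2 ⟨c - t, h, sub_add_cancel c t⟩)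
    refine ⟨normalize R, mem_grow.2 ⟨Q, hQ, c - t, hc, hcQ, rfl⟩, minCorner R + t, ?_⟩
    calc insert c (Q.image (· + t)) = R.image (· + t) := by rw [image_insert, sub_add_cancel]
      _ = ((normalize R).image (· + minCorner R)).image (· + t) := by
          rw [image_add_minCorner_normalize]
      _ = (normalize R).image (· + (minCorner R + t)) := by
          simp only [image_image, Function.comp_def, add_assoc]

end Enumeration

section Rotation

lemma rotQ_add (a b : ℤ × ℤ) : rotQ (a + b) = rotQ a + rotQ b := by
  simp only [rotQ, Prod.fst_add, Prod.snd_add, neg_add, Prod.mk_add_mk]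

lemma iterate_rotQ_add (k : ℕ) (a b : ℤ × ℤ) : rotQ^[k] (a + b) = rotQ^[k] a + rotQ^[k] b := by
  induction k generalizing a b with
  | zero => rfl
  | succ k ih => simp only [Function.iterate_succ_apply, rotQ_add, ih]

lemma iterate_rotQ_mod_four (k : ℕ) : rotQ^[k % 4] = rotQ^[k] := by
  have h4 : rotQ^[4] = id := funext fun c => by simp [rotQ]
  conv_rhs => rw [← Nat.mod_add_div k 4, Function.iterate_add, Function.iterate_mul, h4,
    Function.iterate_id, Function.comp_id]

def rotationClass (P : Finset (ℤ × ℤ)) : Finset (Finset (ℤ × ℤ)) :=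
  (range 4).image fun k => normalize (P.image rotQ^[k])

lemma mem_rotationClass {P X : Finset (ℤ × ℤ)} :
    X ∈ rotationClass P ↔ ∃ k : ℕ, normalize (P.image rotQ^[k]) = X := by
  simp only [rotationClass, mem_image, mem_range]
  exact ⟨fun ⟨k, _, h⟩ => ⟨k, h⟩,
    fun ⟨k, h⟩ => ⟨k % 4, k.mod_lt (by norm_num), by rw [iterate_rotQ_mod_four, h]⟩⟩

lemma rotationClass_image_add (P : Finset (ℤ × ℤ)) (t : ℤ × ℤ) :
    rotationClass (P.image (· + t)) = rotationClass P := by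
  ext X
  simp only [mem_rotationClass]
  refine exists_congr fun k => ?_
  have : (P.image (· + t)).image rotQ^[k] = (P.image rotQ^[k]).image (· + rotQ^[k] t) := by
    simp only [image_image, Function.comp_def, iterate_rotQ_add]
  rw [this, normalize_image_add]

lemma rotationClass_image_iterate_rotQ (P : Finset (ℤ × ℤ)) (j : ℕ) :
    rotationClass (P.image rotQ^[j]) = rotationClass P := by
  ext X
  simp only [mem_rotationClass, image_image, ← Function.iterate_add]
  constructor
  · rintro ⟨k, rfl⟩
    exact ⟨k + j, rfl⟩
  · rintro ⟨k, rfl⟩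
    refine ⟨k + 3 * j, ?_⟩
    rw [← iterate_rotQ_mod_four, ← iterate_rotQ_mod_four k,
      show (k + 3 * j + j) % 4 = k % 4 by omega]

lemma rotationClass_eq_iff {P Q : Finset (ℤ × ℤ)} : rotationClass P = rotationClass Q ↔
    ∃ (k : ℕ) (t : ℤ × ℤ), Q = P.image (fun c => rotQ^[k] c + t) := by
  constructor
  · intro h
    have hQ : normalize Q ∈ rotationClass P := h ▸ mem_rotationClass.2 ⟨0, by simp⟩
    obtain ⟨k, hk⟩ := mem_rotationClass.1 hQ
    refine ⟨k, minCorner Q - minCorner (P.image rotQ^[k]), ?_⟩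
    calc Q = (normalize Q).image (· + minCorner Q) := (image_add_minCorner_normalize Q).symm
      _ = ((P.image rotQ^[k]).image (· - minCorner (P.image rotQ^[k]))).image
            (· + minCorner Q) := by
          rw [← hk, normalize]
      _ = _ := by
          simp only [image_image, Function.comp_def]
          congr 1
          funext c
          abel
  · rintro ⟨k, t, rfl⟩
    have : P.image (fun c => rotQ^[k] c + t) = (P.image rotQ^[k]).image (· + t) := by
      rw [image_image]
      rfl
    rw [this, rotationClass_image_add, rotationClass_image_iterate_rotQ]

end Rotation

lemma range_rotationClass_pento : Set.range (fun P : Pento => rotationClass P.1) =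
    ↑((fixedPolyominoes 4).image rotationClass) := by
  ext X
  simp only [Set.mem_range, coe_image, Set.mem_image, mem_coe]
  constructor
  · rintro ⟨P, rfl⟩
    obtain ⟨Q, hQ, t, hPQ⟩ := exists_mem_fixedPolyominoes P.2.1 P.2.2
    exact ⟨Q, hQ, by rw [hPQ, rotationClass_image_add]⟩
  · rintro ⟨Q, hQ, rfl⟩
    exact ⟨⟨Q, card_eq_and_conn_of_mem_fixedPolyominoes hQ⟩, rfl⟩

lemma card_image_rotationClass_fixedPolyominoes_four :
    ((fixedPolyominoes 4).image rotationClass).card = 18 := by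
  decide +kernel

end Polyomino

/-- There are exactly 18 one-sided pentominoes. -/
theorem one_sided_pentominoes_card : Nat.card (Quot pentoRel) = 18 := by
  rw [Nat.card_quot_eq_card_range (r := pentoRel) (fun P : Pento => Polyomino.rotationClass P.1)
      fun _ _ => Polyomino.rotationClass_eq_iff.symm,
    Polyomino.range_rotationClass_pento, Nat.card_coe_set_eq, Set.ncard_coe_finset,
    Polyomino.card_image_rotationClass_fixedPolyominoes_four]
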